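/- arXiv:0807.4685 — 2 statements merged into one kernel-verified Lean document; each statement's English description precedes it below -/
import Mathlib

section
/- For every endomorphism X of a finite-dimensional real vector space V there exist unique commuting endomorphisms E, H, N of V with X = E + H + N, where E is semisimple with purely imaginary eigenvalues, H is semisimple with real eigenvalues, and N is nilpotent. -/
open TensorProduct

/-- An endomorphism of a vector space over `K` is diagonalizable if its eigenspaces span. -/
def IsDiag {K M : Type*} [Field K] [AddCommGroup M] [Module K M]
    (f : Module.End K M) : Prop :=
  (⨆ μ : K, f.eigenspace μ) = ⊤

/-- The complexification of a real endomorphism, acting on `ℂ ⊗[ℝ] V`. -/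
noncomputable def cplx {V : Type*} [AddCommGroup V] [Module ℝ V]
    (X : Module.End ℝ V) : Module.End ℂ (ℂ ⊗[ℝ] V) :=
  LinearMap.baseChange ℂ X

/-- `X` is (additively) elliptic: semisimple with purely imaginary eigenvalues. -/
noncomputable def IsElliptic {V : Type*} [AddCommGroup V] [Module ℝ V]
    (X : Module.End ℝ V) : Prop :=
  IsDiag (cplx X) ∧ ∀ μ : ℂ, (cplx X).HasEigenvalue μ → μ.re = 0

/-- `X` is (additively) hyperbolic: semisimple with real eigenvalues. -/
noncomputable def IsHyperbolic {V : Type*} [AddCommGroup V] [Module ℝ V]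
    (X : Module.End ℝ V) : Prop :=
  IsDiag (cplx X) ∧ ∀ μ : ℂ, (cplx X).HasEigenvalue μ → μ.im = 0

/-- `g` is (multiplicatively) elliptic: semisimple with eigenvalues of absolute value one. -/
noncomputable def IsMultElliptic {V : Type*} [AddCommGroup V] [Module ℝ V]
    (g : Module.End ℝ V) : Prop :=
  IsDiag (cplx g) ∧ ∀ μ : ℂ, (cplx g).HasEigenvalue μ → ‖μ‖ = 1

/-- `g` is (multiplicatively) hyperbolic: semisimple with positive real eigenvalues. -/
noncomputable def IsMultHyperbolic {V : Type*} [AddCommGroup V] [Module ℝ V]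
    (g : Module.End ℝ V) : Prop :=
  IsDiag (cplx g) ∧ ∀ μ : ℂ, (cplx g).HasEigenvalue μ → μ.im = 0 ∧ 0 < μ.re

/-!
Existence: by Jordan–Chevalley, `X = S + N` with `S` semisimple, `N` nilpotent, both polynomials
in `X`. The complex roots of the minimal polynomial of `S` are stable under conjugation, so the real
part is interpolated on them by a real polynomial `p`; then `H = p(S)` acts on the eigenspaces of
the complexification of `S` by `Re μ`, and `E = S - H` by `i Im μ`.

Uniqueness: another decomposition commutes with `X`, hence with the polynomials `E, H, N` in `X`.
Jordan–Chevalley uniqueness over `ℂ` gives `N' = N` and `E' + H' = S`. Eigenvalues of a difference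
of commuting operators are differences of eigenvalues (they share an eigenvector), so
`H - H' = E' - E` is semisimple with eigenvalues both real and purely imaginary, hence zero.
-/

open Polynomial ComplexConjugate

namespace Module.End

section Field

variable {K V : Type*} [Field K] [AddCommGroup V] [Module K V] [FiniteDimensional K V]
  {f g : End K V}

theorem isSemisimple_of_isDiag (hf : IsDiag f) : f.IsSemisimple := by
  let p : K[X] := ∏ μ ∈ f.finite_hasEigenvalue.toFinset, (X - C μ)
  have hp : p.Separable := separable_prod_X_sub_C_iff'.mpr fun _ _ _ _ h ↦ h
  refine isSemisimple_of_squarefree_aeval_eq_zero hp.squarefree ?_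
  suffices ⊤ ≤ LinearMap.ker (aeval f p) from LinearMap.ker_eq_top.mp (top_le_iff.mp this)
  rw [← hf]
  refine iSup_le fun μ x hx ↦ ?_
  rw [LinearMap.mem_ker, aeval_apply_of_mem_apply_eq_smul (mem_eigenspace_iff.mp hx)]
  rcases eq_or_ne x 0 with rfl | hx0
  · exact smul_zero _
  · have hμ : f.HasEigenvalue μ := hasEigenvalue_of_hasEigenvector ⟨hx, hx0⟩
    rw [eval_prod, Finset.prod_eq_zero (f.finite_hasEigenvalue.mem_toFinset.mpr hμ) (by simp),
      zero_smul]

variable [IsAlgClosed K]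

theorem isDiag_iff_isSemisimple : IsDiag f ↔ f.IsSemisimple :=
  ⟨isSemisimple_of_isDiag, IsSemisimple.iSup_eigenspace_eq_top⟩

theorem exists_hasEigenvector_of_commute (hfg : Commute f g) {ν : K} (hν : g.HasEigenvalue ν) :
    ∃ μ x, f.HasEigenvector μ x ∧ g.HasEigenvector ν x := by
  have hmaps : ∀ x ∈ g.eigenspace ν, f x ∈ g.eigenspace ν := fun x hx ↦ by
    simpa using mapsTo_genEigenspace_of_comm hfg.symm ν 1 (by simpa using hx)
  have : Nontrivial (g.eigenspace ν) := Submodule.nontrivial_iff_ne_bot.mpr hν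
  obtain ⟨μ, hμ⟩ := exists_eigenvalue (f.restrict hmaps)
  obtain ⟨⟨x, hxν⟩, hx, hx0⟩ := hμ.exists_hasEigenvector
  refine ⟨μ, x, ⟨?_, by simpa using hx0⟩, ⟨hxν, by simpa using hx0⟩⟩
  simpa using eigenspace_restrict_le_eigenspace f hmaps μ ⟨_, hx, rfl⟩

theorem HasEigenvalue.exists_eq_sub_of_commute (hfg : Commute f g) {ν : K}
    (hν : (f - g).HasEigenvalue ν) :
    ∃ μ₁ μ₂, f.HasEigenvalue μ₁ ∧ g.HasEigenvalue μ₂ ∧ ν = μ₁ - μ₂ := by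
  obtain ⟨μ, x, hf, hfg'⟩ :=
    exists_hasEigenvector_of_commute ((Commute.refl f).sub_right hfg) hν
  refine ⟨μ, μ - ν, hasEigenvalue_of_hasEigenvector hf,
    hasEigenvalue_of_hasEigenvector ⟨?_, hf.2⟩, by ring⟩
  have h1 := mem_eigenspace_iff.mp hf.1
  have h2 := mem_eigenspace_iff.mp hfg'.1
  rw [LinearMap.sub_apply, h1] at h2
  rw [mem_eigenspace_iff, sub_smul, ← h2, sub_sub_cancel]

theorem HasEigenvalue.exists_eq_eval_of_aeval {p : K[X]} {ν : K}
    (hν : (aeval f p).HasEigenvalue ν) : ∃ μ, f.HasEigenvalue μ ∧ p.eval μ = ν := by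
  obtain ⟨μ, x, hf, hp⟩ := exists_hasEigenvector_of_commute
    (Algebra.commute_of_mem_adjoin_self (aeval_mem_adjoin_singleton K f)) hν
  refine ⟨μ, hasEigenvalue_of_hasEigenvector hf, smul_left_injective K hf.2 ?_⟩
  change p.eval μ • x = ν • x
  rw [← aeval_apply_of_hasEigenvector hf, mem_eigenspace_iff.mp hp.1]

end Field

end Module.End

theorem Algebra.commute_of_mem_adjoin_singleton {R A : Type*} [CommSemiring R] [Semiring A]
    [Algebra R A] {x a b : A} (ha : a ∈ adjoin R {x}) (hb : b ∈ adjoin R {x}) : Commute a b :=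
  commute_of_mem_adjoin_singleton_of_commute hb (commute_of_mem_adjoin_self ha).symm

theorem Polynomial.exists_real_interpolant_of_conj_invariant {s : Finset ℂ}
    (hs : ∀ z ∈ s, conj z ∈ s) (r : ℂ → ℝ) (hr : ∀ z ∈ s, r (conj z) = r z) :
    ∃ p : ℝ[X], ∀ z ∈ s, aeval z p = r z := by
  set q := Lagrange.interpolate s id (fun z ↦ (r z : ℂ))
  have hq : ∀ z ∈ s, q.eval z = r z := fun z hz ↦
    Lagrange.eval_interpolate_at_node _ (Set.injOn_id _) hz
  have hq_conj : q.map (starRingEnd ℂ) = q := by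
    refine Lagrange.eq_interpolate_of_eval_eq _ (Set.injOn_id _) ?_ fun z hz ↦ ?_
    · rw [degree_map]
      exact Lagrange.degree_interpolate_lt _ (Set.injOn_id _)
    · rw [id, eval_map]
      conv_lhs => rw [← Complex.conj_conj z]
      rw [eval₂_hom, hq _ (hs z hz), hr z hz, Complex.conj_ofReal]
  have hq_lifts : q ∈ lifts (algebraMap ℝ ℂ) := by
    refine (lifts_iff_coeff_lifts q).mpr fun n ↦ ⟨(q.coeff n).re, ?_⟩
    rw [Complex.coe_algebraMap, ← Complex.conj_eq_iff_re, ← coeff_map, hq_conj]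
  obtain ⟨p, hp⟩ := (mem_lifts q).mp hq_lifts
  exact ⟨p, fun z hz ↦ by rw [← aeval_map_algebraMap ℂ, hp, coe_aeval_eq_eval, hq z hz]⟩

section Complexification

variable {V : Type*} [AddCommGroup V] [Module ℝ V]

theorem cplx_eq_baseChangeHom (f : Module.End ℝ V) :
    cplx f = Module.End.baseChangeHom ℝ ℂ V f :=
  rfl

theorem cplx_injective : Function.Injective (cplx (V := V)) := by
  intro f g hfg
  ext v
  refine sub_eq_zero.mp ((Module.FaithfullyFlat.one_tmul_eq_zero_iff ℝ V (A := ℂ) _).mp ?_)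
  rw [tmul_sub, sub_eq_zero]
  exact LinearMap.congr_fun hfg (1 ⊗ₜ v)

theorem cplx_add (f g : Module.End ℝ V) : cplx (f + g) = cplx f + cplx g :=
  LinearMap.baseChange_add f g

theorem cplx_sub (f g : Module.End ℝ V) : cplx (f - g) = cplx f - cplx g :=
  LinearMap.baseChange_sub f g

theorem Commute.cplx {f g : Module.End ℝ V} (h : Commute f g) : Commute (cplx f) (cplx g) :=
  h.map (Module.End.baseChangeHom ℝ ℂ V)

theorem IsNilpotent.cplx {f : Module.End ℝ V} (h : IsNilpotent f) : IsNilpotent (cplx f) :=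
  h.map (Module.End.baseChangeHom ℝ ℂ V)

theorem cplx_aeval (f : Module.End ℝ V) (p : ℝ[X]) :
    cplx (aeval f p) = aeval (cplx f) (p.map (algebraMap ℝ ℂ)) := by
  rw [aeval_map_algebraMap, cplx_eq_baseChangeHom, cplx_eq_baseChangeHom, aeval_algHom_apply]

theorem aeval_cplx_map_minpoly (f : Module.End ℝ V) :
    aeval (cplx f) ((minpoly ℝ f).map (algebraMap ℝ ℂ)) = 0 := by
  rw [← cplx_aeval, minpoly.aeval, cplx_eq_baseChangeHom, map_zero]

variable [FiniteDimensional ℝ V]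

theorem Module.End.IsSemisimple.cplx {f : Module.End ℝ V} (hf : f.IsSemisimple) :
    (cplx f).IsSemisimple := by
  have hsep : (minpoly ℝ f).Separable :=
    PerfectField.separable_iff_squarefree.mpr hf.minpoly_squarefree
  exact Module.End.isSemisimple_of_squarefree_aeval_eq_zero
    (hsep.map (f := algebraMap ℝ ℂ)).squarefree (aeval_cplx_map_minpoly f)

theorem Module.End.HasEigenvalue.exists_mem_aroots_of_cplx_aeval {f : Module.End ℝ V}
    {p : ℝ[X]} {ν : ℂ} (hν : (cplx (aeval f p)).HasEigenvalue ν) :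
    ∃ μ ∈ (minpoly ℝ f).aroots ℂ, aeval μ p = ν := by
  rw [cplx_aeval] at hν
  obtain ⟨μ, hμ, rfl⟩ := hν.exists_eq_eval_of_aeval
  have hroot := (Module.End.hasEigenvalue_iff_isRoot.mp hμ).dvd
    (minpoly.dvd ℂ _ (aeval_cplx_map_minpoly f))
  refine ⟨μ, mem_aroots.mpr ⟨minpoly.ne_zero_of_finite ℝ f, ?_⟩, (eval_map_algebraMap p μ).symm⟩
  rwa [aeval_def, eval₂_eq_eval_map]

end Complexification

section EllipticHyperbolic

variable {V : Type*} [AddCommGroup V] [Module ℝ V] [FiniteDimensional ℝ V]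
  {f g : Module.End ℝ V}

theorem isElliptic_iff :
    IsElliptic f ↔ (cplx f).IsSemisimple ∧ ∀ μ, (cplx f).HasEigenvalue μ → μ.re = 0 := by
  rw [IsElliptic, Module.End.isDiag_iff_isSemisimple]

theorem isHyperbolic_iff :
    IsHyperbolic f ↔ (cplx f).IsSemisimple ∧ ∀ μ, (cplx f).HasEigenvalue μ → μ.im = 0 := by
  rw [IsHyperbolic, Module.End.isDiag_iff_isSemisimple]

theorem IsElliptic.sub (hf : IsElliptic f) (hg : IsElliptic g) (hfg : Commute f g) :
    IsElliptic (f - g) := by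
  rw [isElliptic_iff, cplx_sub] at *
  refine ⟨hf.1.sub_of_commute hfg.cplx hg.1, fun ν hν ↦ ?_⟩
  obtain ⟨μ₁, μ₂, h₁, h₂, rfl⟩ := hν.exists_eq_sub_of_commute hfg.cplx
  rw [Complex.sub_re, hf.2 μ₁ h₁, hg.2 μ₂ h₂, sub_zero]

theorem IsHyperbolic.sub (hf : IsHyperbolic f) (hg : IsHyperbolic g) (hfg : Commute f g) :
    IsHyperbolic (f - g) := by
  rw [isHyperbolic_iff, cplx_sub] at *
  refine ⟨hf.1.sub_of_commute hfg.cplx hg.1, fun ν hν ↦ ?_⟩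
  obtain ⟨μ₁, μ₂, h₁, h₂, rfl⟩ := hν.exists_eq_sub_of_commute hfg.cplx
  rw [Complex.sub_im, hf.2 μ₁ h₁, hg.2 μ₂ h₂, sub_zero]

theorem eq_zero_of_isElliptic_of_isHyperbolic (hE : IsElliptic f) (hH : IsHyperbolic f) :
    f = 0 := by
  rw [isElliptic_iff] at hE
  have hf : cplx f = 0 := hE.1.eq_zero_iff_forall_eigenvalue.mpr fun μ hμ ↦
    Complex.ext_iff.mpr ⟨hE.2 μ hμ, hH.2 μ hμ⟩
  exact cplx_injective (hf.trans LinearMap.baseChange_zero.symm)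

theorem exists_isHyperbolic_isElliptic_sub_of_isSemisimple {S : Module.End ℝ V}
    (hS : S.IsSemisimple) :
    ∃ H ∈ Algebra.adjoin ℝ {S}, IsHyperbolic H ∧ IsElliptic (S - H) := by
  have hconj : ∀ z ∈ ((minpoly ℝ S).aroots ℂ).toFinset,
      conj z ∈ ((minpoly ℝ S).aroots ℂ).toFinset := fun z hz ↦ by
    rw [Multiset.mem_toFinset, mem_aroots] at hz ⊢
    exact ⟨hz.1, by rw [aeval_conj, hz.2, map_zero]⟩
  obtain ⟨p, hp⟩ := exists_real_interpolant_of_conj_invariant hconj Complex.re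
    fun z _ ↦ Complex.conj_re z
  have hdiag : ∀ q : ℝ[X], IsDiag (cplx (aeval S q)) := fun q ↦
    Module.End.isDiag_iff_isSemisimple.mpr (hS.aeval q).cplx
  have hE : S - aeval S p = aeval S (X - p) := by rw [map_sub, aeval_X]
  refine ⟨aeval S p, aeval_mem_adjoin_singleton ℝ S, ⟨hdiag p, fun ν hν ↦ ?_⟩,
    hE ▸ ⟨hdiag _, fun ν hν ↦ ?_⟩⟩
  · obtain ⟨μ, hμ, rfl⟩ := hν.exists_mem_aroots_of_cplx_aeval
    rw [hp μ (Multiset.mem_toFinset.mpr hμ), Complex.ofReal_im]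
  · obtain ⟨μ, hμ, rfl⟩ := hν.exists_mem_aroots_of_cplx_aeval
    rw [map_sub, aeval_X, hp μ (Multiset.mem_toFinset.mpr hμ), Complex.sub_re,
      Complex.ofReal_re, sub_self]

theorem IsElliptic.isSemisimple_cplx_add (hf : IsElliptic f) (hg : IsHyperbolic g)
    (hfg : Commute f g) : (cplx (f + g)).IsSemisimple := by
  rw [cplx_add]
  exact (isElliptic_iff.mp hf).1.add_of_commute hfg.cplx (isHyperbolic_iff.mp hg).1

theorem isElliptic_isHyperbolic_unique {E₁ H₁ E₂ H₂ : Module.End ℝ V}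
    (hE₁ : IsElliptic E₁) (hE₂ : IsElliptic E₂) (hH₁ : IsHyperbolic H₁) (hH₂ : IsHyperbolic H₂)
    (hE : Commute E₁ E₂) (hH : Commute H₁ H₂) (h : E₁ + H₁ = E₂ + H₂) :
    E₁ = E₂ ∧ H₁ = H₂ := by
  have hdiff : E₁ - E₂ = H₂ - H₁ := by rw [sub_eq_sub_iff_add_eq_add, h, add_comm]
  have hH_eq : H₂ - H₁ = 0 :=
    eq_zero_of_isElliptic_of_isHyperbolic (hdiff ▸ hE₁.sub hE₂ hE) (hH₂.sub hH₁ hH.symm)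
  rw [hH_eq, sub_eq_zero] at hdiff
  exact ⟨hdiff, (sub_eq_zero.mp hH_eq).symm⟩

theorem isNilpotent_isSemisimple_cplx_unique {n₁ s₁ n₂ s₂ : Module.End ℝ V}
    (hn₁ : IsNilpotent n₁) (hs₁ : (cplx s₁).IsSemisimple)
    (hn₂ : IsNilpotent n₂) (hs₂ : (cplx s₂).IsSemisimple)
    (hc₁ : Commute n₁ s₁) (hc₂ : Commute n₂ s₂) (h : n₁ + s₁ = n₂ + s₂) :
    n₁ = n₂ ∧ s₁ = s₂ := by
  obtain ⟨hn, hs⟩ := Module.End.isNilpotent_isSemisimple_unique hn₁.cplx hs₁ hn₂.cplx hs₂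
    hc₁.cplx hc₂.cplx (by rw [← cplx_add, h, cplx_add])
  exact ⟨cplx_injective hn, cplx_injective hs⟩

end EllipticHyperbolic

theorem additive_jordan_decomposition
    {V : Type*} [AddCommGroup V] [Module ℝ V] [FiniteDimensional ℝ V]
    (X : Module.End ℝ V) :
    ∃! d : Module.End ℝ V × Module.End ℝ V × Module.End ℝ V,
      Commute d.1 d.2.1 ∧ Commute d.1 d.2.2 ∧ Commute d.2.1 d.2.2 ∧
      IsElliptic d.1 ∧ IsHyperbolic d.2.1 ∧ IsNilpotent d.2.2 ∧
      X = d.1 + d.2.1 + d.2.2 := by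
  obtain ⟨N, hN, S, hS, hN_nil, hS_ss, hX⟩ := X.exists_isNilpotent_isSemisimple
  obtain ⟨H, hH_mem, hH, hE⟩ := exists_isHyperbolic_isElliptic_sub_of_isSemisimple hS_ss
  replace hH_mem : H ∈ Algebra.adjoin ℝ {X} :=
    Algebra.adjoin_le (Set.singleton_subset_iff.mpr hS) hH_mem
  have hE_mem : S - H ∈ Algebra.adjoin ℝ {X} := sub_mem hS hH_mem
  refine ⟨(S - H, H, N), ⟨Algebra.commute_of_mem_adjoin_singleton hE_mem hH_mem,
    Algebra.commute_of_mem_adjoin_singleton hE_mem hN,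
    Algebra.commute_of_mem_adjoin_singleton hH_mem hN, hE, hH, hN_nil,
    by rw [hX, sub_add_cancel, add_comm]⟩, ?_⟩
  rintro ⟨E', H', N'⟩ ⟨hE'H', hE'N', hH'N', hE', hH', hN', hX'⟩
  have hE'X : Commute E' X := hX' ▸ ((Commute.refl E').add_right hE'H').add_right hE'N'
  have hH'X : Commute H' X := hX' ▸ (hE'H'.symm.add_right (Commute.refl H')).add_right hH'N'
  obtain ⟨rfl, hS'⟩ := isNilpotent_isSemisimple_cplx_unique hN_nil hS_ss.cplx hN'
    (hE'.isSemisimple_cplx_add hH' hE'H') (Algebra.commute_of_mem_adjoin_singleton hN hS)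
    (hE'N'.add_left hH'N').symm (hX.symm.trans (hX'.trans (add_comm _ _)))
  obtain ⟨hE_eq, hH_eq⟩ := isElliptic_isHyperbolic_unique hE' hE hH' hH
    (Algebra.commute_of_mem_adjoin_singleton_of_commute hE_mem hE'X)
    (Algebra.commute_of_mem_adjoin_singleton_of_commute hH_mem hH'X)
    (by rw [← hS', sub_add_cancel])
  exact Prod.ext hE_eq (Prod.ext hH_eq rfl)
end

section
/- If E is an endomorphism of a finite-dimensional real vector space V that is semisimple with purely imaginary eigenvalues, then ad(E) : End(V) → End(V), Y ↦ EY − YE, is semisimple with purely imaginary eigenvalues. -/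
open TensorProduct

/-- The adjoint action `Y ↦ T * Y - Y * T` on endomorphisms. -/
noncomputable def adC {W : Type*} [AddCommGroup W] [Module ℂ W]
    (T : Module.End ℂ W) : Module.End ℂ (Module.End ℂ W) :=
  LinearMap.mulLeft ℂ T - LinearMap.mulRight ℂ T

/-! If `v` is an eigenbasis of the complexification `T` of `E`, with `T vᵢ = μᵢ vᵢ`, then the
matrix units `vᵢ ⊗ vⱼ*` form a basis of `End (ℂ ⊗ V)` consisting of eigenvectors of `ad T`, with
eigenvalues `μᵢ - μⱼ`. So `ad T` is diagonalizable, and since eigenspaces for distinct eigenvalues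
are independent, every eigenvalue of `ad T` is such a difference, hence purely imaginary. -/

open Module Module.End
open scoped Pointwise

section

variable {K M : Type*} [Field K] [AddCommGroup M] [Module K M]

theorem Module.End.HasEigenvalue.mem_of_top_le_biSup_eigenspace {f : End K M} {S : Set K}
    {ν : K} (hν : f.HasEigenvalue ν) (h : ⊤ ≤ ⨆ μ ∈ S, f.eigenspace μ) : ν ∈ S := by
  by_contra hνS
  have hle : f.eigenspace ν ≤ ⨆ (μ : K) (_ : μ ≠ ν), f.eigenspace μ :=
    le_top.trans <| h.trans <| iSup₂_mono' fun μ hμ ↦ ⟨μ, fun h ↦ hνS (h ▸ hμ), le_rfl⟩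
  exact hν ((iSupIndep_def.mp f.eigenspaces_iSupIndep ν).eq_bot_of_le hle)

theorem IsDiag.of_top_le_biSup_eigenspace {f : End K M} {S : Set K}
    (h : ⊤ ≤ ⨆ μ ∈ S, f.eigenspace μ) : IsDiag f :=
  top_le_iff.mp <| h.trans <| iSup₂_le fun μ _ ↦ le_iSup f.eigenspace μ

theorem IsDiag.top_le_biSup_eigenspace_mulLeft_sub_mulRight [FiniteDimensional K M]
    {f : End K M} (hf : IsDiag f) :
    ⊤ ≤ ⨆ μ ∈ {a | f.HasEigenvalue a} - {a | f.HasEigenvalue a},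
      eigenspace (LinearMap.mulLeft K f - LinearMap.mulRight K f) μ := by
  classical
  let I := Σ ν : K, Fin (finrank K (f.eigenspace ν))
  have hint := DirectSum.isInternal_submodule_of_iSupIndep_of_iSup_eq_top
    f.eigenspaces_iSupIndep hf
  let v : Basis I K M := hint.collectedBasis fun ν ↦ finBasis K (f.eigenspace ν)
  have : Fintype I := FiniteDimensional.fintypeBasisIndex v
  have hv (i : I) : f.HasEigenvector i.1 (v i) := ⟨hint.collectedBasis_mem _ i, v.ne_zero i⟩
  rw [← v.end.span_eq, Submodule.span_le]
  rintro - ⟨⟨i, j⟩, rfl⟩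
  refine Submodule.mem_iSup_of_mem (i.1 - j.1) <| Submodule.mem_iSup_of_mem
    (Set.sub_mem_sub (hasEigenvalue_of_hasEigenvector (hv i))
      (hasEigenvalue_of_hasEigenvector (hv j))) ?_
  rw [mem_eigenspace_iff, ← v.lie_end_of_apply_eq_smul Sigma.fst f fun k ↦ (hv k).apply_eq_smul]
  simp [Ring.lie_def]

end

theorem ad_of_elliptic_is_elliptic
    {V : Type*} [AddCommGroup V] [Module ℝ V] [FiniteDimensional ℝ V]
    (E : Module.End ℝ V) (hE : IsElliptic E) :
    IsDiag (adC (cplx E)) ∧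
    ∀ μ : ℂ, (adC (cplx E)).HasEigenvalue μ → μ.re = 0 := by
  obtain ⟨hdiag, him⟩ := hE
  have hspan := hdiag.top_le_biSup_eigenspace_mulLeft_sub_mulRight
  refine ⟨IsDiag.of_top_le_biSup_eigenspace hspan, fun μ hμ ↦ ?_⟩
  obtain ⟨a, ha, c, hc, rfl⟩ := hμ.mem_of_top_le_biSup_eigenspace hspan
  rw [Complex.sub_re, him a ha, him c hc, sub_zero]
end
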